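/- Let Σ and Σ_k be real symmetric positive definite d×d matrices, T, β > 0, and K := I + TΣ⁻¹. Then the following matrix identity holds: Σ⁻¹/(2β) + I/(2βT) − ( (2βT)²·Σ_k⁻¹ + 2βT·K⁻¹ )⁻¹ = ( 2βT·K⁻¹ + K⁻¹Σ_k K⁻¹ )⁻¹, and moreover this common value equals (2βT·I + Σ_k K⁻¹)⁻¹ K. -/

import Mathlib

open Matrix

private lemma posdef_add {d : ℕ} {A B : Matrix (Fin d) (Fin d) ℝ}
    (hA : A.PosDef) (hB : B.PosDef) : (A + B).PosDef := by
  exact hA.add hB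

private lemma posdef_smul {d : ℕ} {A : Matrix (Fin d) (Fin d) ℝ} {c : ℝ}
    (hc : 0 < c) (hA : A.PosDef) : (c • A).PosDef := by
  have hherm : (c • A).IsHermitian := by
    unfold Matrix.IsHermitian
    rw [Matrix.conjTranspose_smul, hA.1.eq]
    simp
  exact hA.smul hc

/-- The completing-the-square identity for the proximal inverse covariance:
with `K = I + TΣ⁻¹`,
`Σ⁻¹/(2β) + I/(2βT) − ((2βT)² Σ_k⁻¹ + 2βT K⁻¹)⁻¹ = (2βT K⁻¹ + K⁻¹ Σ_k K⁻¹)⁻¹`,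
and this common value equals `(2βT I + Σ_k K⁻¹)⁻¹ K`. -/
theorem stmt_15 (d : ℕ) (Sig Sigk : Matrix (Fin d) (Fin d) ℝ) (T β : ℝ)
    (hSigsymm : Sig.IsSymm) (hSigpd : Sig.PosDef)
    (hSigksymm : Sigk.IsSymm) (hSigkpd : Sigk.PosDef)
    (hT : 0 < T) (hβ : 0 < β)
    (K : Matrix (Fin d) (Fin d) ℝ) (hK : K = 1 + T • Sig⁻¹) :
    (1 / (2 * β)) • Sig⁻¹ + (1 / (2 * β * T)) • (1 : Matrix (Fin d) (Fin d) ℝ)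
        - (((2 * β * T) ^ 2) • Sigk⁻¹ + (2 * β * T) • K⁻¹)⁻¹
      = ((2 * β * T) • K⁻¹ + K⁻¹ * Sigk * K⁻¹)⁻¹ ∧
    ((2 * β * T) • K⁻¹ + K⁻¹ * Sigk * K⁻¹)⁻¹
      = ((2 * β * T) • (1 : Matrix (Fin d) (Fin d) ℝ) + Sigk * K⁻¹)⁻¹ * K := by
  have ha : (0:ℝ) < 2 * β * T := by positivity
  set a : ℝ := 2 * β * T with haa
  have hKpd : K.PosDef := by
    rw [hK]; exact posdef_add Matrix.PosDef.one (posdef_smul hT hSigpd.inv)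
  set M : Matrix (Fin d) (Fin d) ℝ := a • K + Sigk with hM
  have hMpd : M.PosDef := posdef_add (posdef_smul ha hKpd) hSigkpd
  have hKu : IsUnit K.det := hKpd.det_pos.ne'.isUnit
  have hMu : IsUnit M.det := hMpd.det_pos.ne'.isUnit
  have hSu : IsUnit Sigk.det := hSigkpd.det_pos.ne'.isUnit
  have hKK : K * K⁻¹ = 1 := Matrix.mul_nonsing_inv K hKu
  have hKK' : K⁻¹ * K = 1 := Matrix.nonsing_inv_mul K hKu
  have hMM : M * M⁻¹ = 1 := Matrix.mul_nonsing_inv M hMu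
  have hMM' : M⁻¹ * M = 1 := Matrix.nonsing_inv_mul M hMu
  have hSS : Sigk * Sigk⁻¹ = 1 := Matrix.mul_nonsing_inv Sigk hSu
  -- inverse of the middle term: (a•K⁻¹ + K⁻¹ Sigk K⁻¹)⁻¹ = K * M⁻¹ * K
  have h1 : ((a • K⁻¹ + K⁻¹ * Sigk * K⁻¹) : Matrix (Fin d) (Fin d) ℝ)⁻¹
      = K * M⁻¹ * K := by
    apply Matrix.inv_eq_right_inv
    have : (a • K⁻¹ + K⁻¹ * Sigk * K⁻¹) = K⁻¹ * M * K⁻¹ := by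
      rw [hM]
      simp only [Matrix.mul_add, Matrix.add_mul, Matrix.mul_smul, Matrix.smul_mul]
      rw [hKK']
      simp [Matrix.mul_assoc]
    rw [this]
    calc K⁻¹ * M * K⁻¹ * (K * M⁻¹ * K)
        = K⁻¹ * (M * ((K⁻¹ * K) * (M⁻¹ * K))) := by
          simp only [Matrix.mul_assoc]
      _ = 1 := by rw [hKK']; simp only [Matrix.one_mul, ← Matrix.mul_assoc, hMM]; exact hKK'
  -- inverse of (a²Σk⁻¹ + aK⁻¹) = a⁻¹ • (Sigk * M⁻¹ * K)
  have h2 : ((a ^ 2 • Sigk⁻¹ + a • K⁻¹) : Matrix (Fin d) (Fin d) ℝ)⁻¹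
      = a⁻¹ • (Sigk * M⁻¹ * K) := by
    apply Matrix.inv_eq_right_inv
    have heq : (a ^ 2 • Sigk⁻¹ + a • K⁻¹) = a • (K⁻¹ * M * Sigk⁻¹) := by
      have e0 : K⁻¹ * M = a • (1 : Matrix (Fin d) (Fin d) ℝ) + K⁻¹ * Sigk := by
        rw [hM, Matrix.mul_add, Matrix.mul_smul, hKK']
      rw [e0, Matrix.add_mul, Matrix.smul_mul, Matrix.one_mul, Matrix.mul_assoc, hSS,
        Matrix.mul_one, smul_add, smul_smul, sq]
    rw [heq]
    rw [Matrix.smul_mul, Matrix.mul_smul, smul_smul, mul_inv_cancel₀ ha.ne', one_smul]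
    calc K⁻¹ * M * Sigk⁻¹ * (Sigk * M⁻¹ * K)
        = K⁻¹ * (M * ((Sigk⁻¹ * Sigk) * (M⁻¹ * K))) := by simp only [Matrix.mul_assoc]
      _ = 1 := by
          rw [Matrix.nonsing_inv_mul Sigk hSu]
          simp only [Matrix.one_mul, ← Matrix.mul_assoc, hMM]
          exact hKK'
  have h3 : ((a • (1 : Matrix (Fin d) (Fin d) ℝ) + Sigk * K⁻¹))⁻¹ = K * M⁻¹ := by
    apply Matrix.inv_eq_right_inv
    have heq : (a • (1 : Matrix (Fin d) (Fin d) ℝ) + Sigk * K⁻¹) = M * K⁻¹ := by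
      rw [hM, Matrix.add_mul, Matrix.smul_mul, hKK]
    rw [heq]
    calc M * K⁻¹ * (K * M⁻¹) = M * ((K⁻¹ * K) * M⁻¹) := by simp only [Matrix.mul_assoc]
      _ = 1 := by rw [hKK', Matrix.one_mul, hMM]
  constructor
  · rw [h1, h2]
    -- LHS first two terms equal a⁻¹ • K
    have hL : (1 / (2 * β)) • Sig⁻¹ + (1 / (2 * β * T)) • (1 : Matrix (Fin d) (Fin d) ℝ)
        = a⁻¹ • K := by
      rw [hK, smul_add, smul_smul, ← haa]
      rw [add_comm]
      congr 1
      · rw [one_div]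
      · congr 1
        rw [haa]
        field_simp
    rw [hL]
    -- Now: a⁻¹ • K - a⁻¹ • (Sigk * M⁻¹ * K) = K * M⁻¹ * K
    have h0 : K = a • (K * M⁻¹ * K) + Sigk * M⁻¹ * K := by
      have : K = M * (M⁻¹ * K) := by rw [← Matrix.mul_assoc, hMM, Matrix.one_mul]
      conv_lhs => rw [this, hM, Matrix.add_mul, Matrix.smul_mul]
      simp [Matrix.mul_assoc]
      rfl
    have hKey : K - Sigk * M⁻¹ * K = a • (K * M⁻¹ * K) := sub_eq_of_eq_add h0
    rw [← smul_sub, hKey, smul_smul, inv_mul_cancel₀ ha.ne', one_smul]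
  · rw [h1, h3]
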